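/- Let h ∈ ℤ[x] be primitive and irreducible over ℚ with a complex root α, let f₁,…,fₘ ∈ ℤ[x₁,…,xₙ] and g₁,…,gₙ ∈ ℤ[x] satisfy fₖ(g₁(α),…,gₙ(α)) = 0 for all k. If p is a prime such that the reduction of h mod p has a root ᾱ ∈ ℤ/pℤ, then (g₁(ᾱ),…,gₙ(ᾱ)) is a solution of f₁ = ⋯ = fₘ = 0 in (ℤ/pℤ)ⁿ. -/

import Mathlib

/-!
Substituting the `gᵢ` into `fₖ` gives an integer polynomial `Fₖ = fₖ(g₁, …, gₙ)` with `Fₖ(α) = 0`.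
Since `h` is irreducible over `ℚ` it is, up to a unit, the minimal polynomial of `α`, so `h ∣ Fₖ`
in `ℚ[x]`, and by Gauss's lemma (`h` is primitive) already in `ℤ[x]`. Hence `Fₖ(ᾱ) = 0` for every
root `ᾱ` of `h` in any commutative ring, in particular in `ℤ/pℤ`.
-/

open Polynomial

theorem Polynomial.map_cast_dvd_of_irreducible_of_aeval_eq_zero {B : Type*} [Ring B] [Nontrivial B]
    [Algebra ℚ B] {h F : ℤ[X]} (hirr : Irreducible (h.map (Int.castRingHom ℚ))) {α : B}
    (hα : aeval α h = 0) (hF : aeval α F = 0) :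
    h.map (Int.castRingHom ℚ) ∣ F.map (Int.castRingHom ℚ) := by
  have hαQ : aeval α (h.map (algebraMap ℤ ℚ)) = 0 := by rwa [aeval_map_algebraMap]
  have hFQ : aeval α (F.map (algebraMap ℤ ℚ)) = 0 := by rwa [aeval_map_algebraMap]
  exact (Dvd.intro _ (minpoly.eq_of_irreducible hirr hαQ)).trans (minpoly.dvd ℚ α hFQ)

theorem Polynomial.IsPrimitive.dvd_of_aeval_eq_zero {B : Type*} [Ring B] [Nontrivial B]
    [Algebra ℚ B] {h F : ℤ[X]} (hprim : h.IsPrimitive)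
    (hirr : Irreducible (h.map (Int.castRingHom ℚ))) {α : B}
    (hα : aeval α h = 0) (hF : aeval α F = 0) : h ∣ F :=
  (IsPrimitive.Int.dvd_iff_map_cast_dvd_map_cast h F hprim).mpr
    (map_cast_dvd_of_irreducible_of_aeval_eq_zero hirr hα hF)

theorem stmt_4_general (n m : ℕ) (h : Polynomial ℤ) (α : ℂ)
    (f : Fin m → MvPolynomial (Fin n) ℤ) (g : Fin n → Polynomial ℤ)
    (hirr : Irreducible (h.map (Int.castRingHom ℚ)))
    (hprim : h.IsPrimitive)
    (hα : Polynomial.aeval α h = 0)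
    (hsol : ∀ k, MvPolynomial.aeval (fun i => Polynomial.aeval α (g i)) (f k) = 0)
    (p : ℕ) (ᾱ : ZMod p) (hᾱ : Polynomial.aeval ᾱ h = 0) :
    ∀ k, MvPolynomial.aeval (fun i => Polynomial.aeval ᾱ (g i)) (f k) = 0 := by
  intro k
  have hdvd : h ∣ MvPolynomial.aeval g (f k) := by
    refine hprim.dvd_of_aeval_eq_zero hirr hα ?_
    rw [MvPolynomial.comp_aeval_apply]
    exact hsol k
  rw [← MvPolynomial.comp_aeval_apply]
  exact aeval_eq_zero_of_dvd_aeval_eq_zero hdvd hᾱ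

theorem stmt_4 (n m : ℕ) (h : Polynomial ℤ) (α : ℂ)
    (f : Fin m → MvPolynomial (Fin n) ℤ) (g : Fin n → Polynomial ℤ)
    (hirr : Irreducible (h.map (Int.castRingHom ℚ)))
    (hprim : h.IsPrimitive)
    (hα : Polynomial.aeval α h = 0)
    (hsol : ∀ k, MvPolynomial.aeval (fun i => Polynomial.aeval α (g i)) (f k) = 0)
    (p : ℕ) (hp : p.Prime) (ᾱ : ZMod p) (hᾱ : Polynomial.aeval ᾱ h = 0) :
    ∀ k, MvPolynomial.aeval (fun i => Polynomial.aeval ᾱ (g i)) (f k) = 0 :=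
  stmt_4_general n m h α f g hirr hprim hα hsol p ᾱ hᾱ
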